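/- Let Σ be a smooth closed horo-convex hypersurface in hyperbolic space ℍⁿ, i.e. the second fundamental form satisfies h_{αβ} ≥ g_{αβ} (in particular h − (V_{,ν}/V) g ≥ 0 where V = cosh r for distance r to a fixed point). Then (Σ, g, V) is a closed sub-static Riemannian manifold: Δ V g − ∇²V + V Ric^Σ ≥ 0. -/

import Mathlib

section StaticAux

open Matrix in
/-- A real quadratic polynomial of a symmetric matrix, whose values at the
eigenvalues are nonnegative, is positive semidefinite. -/
lemma stmt12AuxPSD {m : Type*} [Fintype m] [DecidableEq m] {M : Matrix m m ℝ}
    (hM : M.IsHermitian) (c₂ c₁ c₀ : ℝ)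
    (hp : ∀ i, 0 ≤ c₂ * hM.eigenvalues i ^ 2 + c₁ * hM.eigenvalues i + c₀) :
    (c₂ • (M * M) + c₁ • M + c₀ • (1 : Matrix m m ℝ)).PosSemidef := by
  set U : Matrix m m ℝ := (hM.eigenvectorUnitary : Matrix m m ℝ) with hUdef
  have hU1 : U * star U = 1 := Matrix.mem_unitaryGroup_iff.mp hM.eigenvectorUnitary.2
  have hU2 : star U * U = 1 := Matrix.mem_unitaryGroup_iff'.mp hM.eigenvectorUnitary.2
  have hsp : M = U * Matrix.diagonal (RCLike.ofReal ∘ hM.eigenvalues) * star U :=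
    hM.spectral_theorem
  have hofReal : (RCLike.ofReal ∘ hM.eigenvalues : m → ℝ) = hM.eigenvalues := by
    funext i; simp [RCLike.ofReal]
  rw [hofReal] at hsp
  have comb : ∀ (d : m → ℝ) (c : ℝ),
      c • (U * Matrix.diagonal d * star U) = U * Matrix.diagonal (fun i => c * d i) * star U := by
    intro d c
    rw [← Matrix.smul_mul, ← Matrix.mul_smul]
    congr 2
    rw [← Matrix.diagonal_smul]
    congr 1
  have hMM : M * M = U * Matrix.diagonal (fun i => hM.eigenvalues i ^ 2) * star U := by
    conv_lhs => rw [hsp]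
    calc (U * Matrix.diagonal hM.eigenvalues * star U) *
          (U * Matrix.diagonal hM.eigenvalues * star U)
        = U * (Matrix.diagonal hM.eigenvalues *
            ((star U * U) * (Matrix.diagonal hM.eigenvalues * star U))) := by
          simp only [Matrix.mul_assoc]
      _ = U * (Matrix.diagonal hM.eigenvalues * Matrix.diagonal hM.eigenvalues) * star U := by
          rw [hU2, Matrix.one_mul]; simp only [Matrix.mul_assoc]
      _ = U * Matrix.diagonal (fun i => hM.eigenvalues i ^ 2) * star U := by
          rw [Matrix.diagonal_mul_diagonal]
          congr 2
          funext i; ring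
  have e2 : c₂ • (M * M) = U * Matrix.diagonal (fun i => c₂ * hM.eigenvalues i ^ 2) * star U := by
    rw [hMM, comb]
  have e1 : c₁ • M = U * Matrix.diagonal (fun i => c₁ * hM.eigenvalues i) * star U := by
    have := comb hM.eigenvalues c₁
    rw [← hsp] at this
    exact this
  have e0 : c₀ • (1 : Matrix m m ℝ) = U * Matrix.diagonal (fun _ : m => c₀ * 1) * star U := by
    have h1 : (1 : Matrix m m ℝ) = U * Matrix.diagonal (fun _ : m => (1:ℝ)) * star U := by
      rw [Matrix.diagonal_one, Matrix.mul_one, hU1]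
    rw [h1, comb]
  have key : c₂ • (M * M) + c₁ • M + c₀ • (1 : Matrix m m ℝ)
      = U * Matrix.diagonal (fun i => c₂ * hM.eigenvalues i ^ 2 + c₁ * hM.eigenvalues i + c₀)
        * star U := by
    rw [e2, e1, e0, ← Matrix.add_mul, ← Matrix.mul_add, ← Matrix.add_mul, ← Matrix.mul_add,
      Matrix.diagonal_add, Matrix.diagonal_add]
    simp only [mul_one]
  rw [key]
  have hD : (Matrix.diagonal
      (fun i => c₂ * hM.eigenvalues i ^ 2 + c₁ * hM.eigenvalues i + c₀)).PosSemidef :=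
    Matrix.posSemidef_diagonal_iff.mpr hp
  exact hD.mul_mul_conjTranspose_same U

end StaticAux

/-- A smooth closed horo-convex hypersurface `Σ` in hyperbolic space
(`h_{αβ} ≥ g_{αβ}`), with `V = cosh r` (so `∇̄²V = V ḡ` ambiently, `V > 0`, and
`V_ν ≤ V` since `h − (V_ν/V) g ≥ h − g ≥ 0`), is a closed sub-static Riemannian
manifold: `ΔV g − ∇²V + V Ric^Σ ≥ 0`. Induced data are given in an orthonormal
frame via the Gauss–Weingarten and Gauss equations (K = −1). -/
theorem stmt12 (n : ℕ) (hn : 3 ≤ n) (S : Type*)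
    (V Vν lapS lapAmb HessAmbνν H : S → ℝ)
    (h HessS RicS HessAmbTan : S → Fin (n - 1) → Fin (n - 1) → ℝ)
    (hsymm : ∀ x α β, h x α β = h x β α)
    (hH : ∀ x, H x = ∑ α, h x α α)
    (hVpos : ∀ x, 0 < V x)
    -- V = cosh r: ambient Hessian ∇̄²V = V ḡ (K = −1)
    (hAmbTan : ∀ x α β, HessAmbTan x α β = V x * (if α = β then 1 else 0))
    (hAmbνν : ∀ x, HessAmbνν x = V x)
    (hAmbLap : ∀ x, lapAmb x = (n : ℝ) * V x)
    -- Gauss–Weingarten relations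
    (hGaussLap : ∀ x, lapS x = lapAmb x - HessAmbνν x - H x * Vν x)
    (hGaussHess : ∀ x α β, HessS x α β = HessAmbTan x α β - Vν x * h x α β)
    -- Gauss equation in hyperbolic space (K = −1)
    (hGaussEq : ∀ x α β, RicS x α β = H x * h x α β - (∑ γ, h x α γ * h x β γ)
        - (n - 2 : ℝ) * (if α = β then 1 else 0))
    -- horo-convexity: h_{αβ} − g_{αβ} ≥ 0
    (hhoro : ∀ x (ξ : Fin (n - 1) → ℝ),
      0 ≤ ∑ α, ∑ β, (h x α β - (if α = β then 1 else 0)) * ξ α * ξ β)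
    -- |∇̄V| = sinh r ≤ cosh r = V, hence V_ν ≤ V
    (hVν : ∀ x, Vν x ≤ V x) :
    ∀ x (ξ : Fin (n - 1) → ℝ),
      0 ≤ ∑ α, ∑ β,
        (lapS x * (if α = β then 1 else 0) - HessS x α β + V x * RicS x α β)
          * ξ α * ξ β := by
  intro x ξ
  classical
  set M : Matrix (Fin (n - 1)) (Fin (n - 1)) ℝ := Matrix.of (h x) with hMdef
  have hMapp : ∀ α β, M α β = h x α β := fun α β => rfl
  have hM : M.IsHermitian := by
    ext α β
    simp only [Matrix.conjTranspose_apply, star_trivial]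
    exact hsymm x β α
  -- all eigenvalues are ≥ 1
  have heig : ∀ i, 1 ≤ hM.eigenvalues i := by
    intro i
    set v : EuclideanSpace ℝ (Fin (n - 1)) := hM.eigenvectorBasis i with hvdef
    have hnorm : ‖v‖ = 1 := hM.eigenvectorBasis.orthonormal.1 i
    have hsum1 : ∑ α, v α * v α = 1 := by
      have h1 : (inner ℝ v v : ℝ) = ∑ α, v α * v α := by
        rw [PiLp.inner_apply]
        simp [RCLike.inner_apply, sq]
      have h2 : (inner ℝ v v : ℝ) = 1 := by
        rw [real_inner_self_eq_norm_mul_norm, hnorm]; norm_num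
      linarith
    have hev : hM.eigenvalues i = ∑ α, v α * (∑ β, M α β * v β) := by
      rw [hM.eigenvalues_eq i]
      simp [dotProduct, Matrix.mulVec, hvdef]
    have hexp : ∑ α, ∑ β, (h x α β - (if α = β then 1 else 0)) * v α * v β
        = (∑ α, v α * (∑ β, M α β * v β)) - ∑ α, v α * v α := by
      rw [← Finset.sum_sub_distrib]
      refine Finset.sum_congr rfl fun α _ => ?_
      have e1 : ∑ β, (h x α β - (if α = β then 1 else 0)) * v α * v β
          = (∑ β, h x α β * v α * v β) - ∑ β, (if α = β then 1 else 0) * v α * v β := by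
        rw [← Finset.sum_sub_distrib]
        refine Finset.sum_congr rfl fun β _ => by ring
      rw [e1]
      congr 1
      · rw [Finset.mul_sum]
        refine Finset.sum_congr rfl fun β _ => ?_
        rw [hMapp]; ring
      · simp
    have hq := hhoro x (fun α => v α)
    rw [hexp, hsum1, ← hev] at hq
    linarith
  -- H is the sum of the eigenvalues (trace)
  have htr : H x = ∑ i, hM.eigenvalues i := by
    have h1 : H x = M.trace := by
      rw [hH]
      simp only [Matrix.trace, Matrix.diag]
      exact Finset.sum_congr rfl fun α _ => (hMapp α α).symm
    have hofReal : (RCLike.ofReal ∘ hM.eigenvalues : Fin (n - 1) → ℝ) = hM.eigenvalues := by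
      funext i; simp [RCLike.ofReal]
    have hsp : M = (hM.eigenvectorUnitary : Matrix _ _ ℝ) * Matrix.diagonal hM.eigenvalues
        * star (hM.eigenvectorUnitary : Matrix _ _ ℝ) := by
      have := hM.spectral_theorem
      rwa [hofReal] at this
    have hU2 : star (hM.eigenvectorUnitary : Matrix (Fin (n-1)) (Fin (n-1)) ℝ) *
        (hM.eigenvectorUnitary : Matrix (Fin (n-1)) (Fin (n-1)) ℝ) = 1 :=
      Matrix.mem_unitaryGroup_iff'.mp hM.eigenvectorUnitary.2
    have h2 : M.trace = (Matrix.diagonal hM.eigenvalues).trace := by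
      conv_lhs => rw [hsp]
      rw [Matrix.trace_mul_comm, ← Matrix.mul_assoc, hU2, Matrix.one_mul]
    rw [h1, h2, Matrix.trace_diagonal]
  -- the sub-static tensor as a quadratic polynomial in M
  set c₂ : ℝ := -V x with hc₂
  set c₁ : ℝ := Vν x + V x * H x with hc₁
  set c₀ : ℝ := -(H x * Vν x) with hc₀
  have hp : ∀ i, 0 ≤ c₂ * hM.eigenvalues i ^ 2 + c₁ * hM.eigenvalues i + c₀ := by
    intro i
    have hfac : c₂ * hM.eigenvalues i ^ 2 + c₁ * hM.eigenvalues i + c₀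
        = (V x * hM.eigenvalues i - Vν x) * (H x - hM.eigenvalues i) := by
      rw [hc₂, hc₁, hc₀]; ring
    rw [hfac]
    have ha : 0 ≤ V x * hM.eigenvalues i - Vν x := by
      nlinarith [heig i, hVpos x, hVν x]
    have hb : 0 ≤ H x - hM.eigenvalues i := by
      have hsplit := Finset.sum_erase_add Finset.univ hM.eigenvalues (Finset.mem_univ i)
      have hnn : 0 ≤ ∑ j ∈ Finset.univ.erase i, hM.eigenvalues j :=
        Finset.sum_nonneg fun j _ => le_trans zero_le_one (heig j)
      rw [htr]
      linarith
    exact mul_nonneg ha hb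
  have hPSD := stmt12AuxPSD hM c₂ c₁ c₀ hp
  have hquad := hPSD.dotProduct_mulVec_nonneg ξ
  set N : Matrix (Fin (n - 1)) (Fin (n - 1)) ℝ := c₂ • (M * M) + c₁ • M + c₀ • 1 with hNdef
  -- entrywise identification of the tensor with N
  have hT : ∀ α β, lapS x * (if α = β then 1 else 0) - HessS x α β + V x * RicS x α β
      = N α β := by
    intro α β
    have hNapp : N α β = c₂ * (∑ γ, M α γ * M γ β) + c₁ * M α β
        + c₀ * (if α = β then 1 else 0) := by
      simp [hNdef, Matrix.mul_apply, Matrix.one_apply, mul_comm]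
    have hsum : ∑ γ, h x α γ * h x β γ = ∑ γ, M α γ * M γ β := by
      refine Finset.sum_congr rfl fun γ _ => ?_
      rw [hMapp, hMapp, hsymm x β γ]
    rw [hNapp, hGaussLap, hGaussHess, hGaussEq, hAmbTan, hAmbνν, hAmbLap, hsum, hMapp,
      hc₂, hc₁, hc₀]
    ring
  -- convert the quadratic form to a dot product
  have hform : ∑ α, ∑ β,
      (lapS x * (if α = β then 1 else 0) - HessS x α β + V x * RicS x α β) * ξ α * ξ β
      = dotProduct (star ξ) (N.mulVec ξ) := by
    simp only [star_trivial, dotProduct, Matrix.mulVec]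
    refine Finset.sum_congr rfl fun α _ => ?_
    rw [Finset.mul_sum]
    refine Finset.sum_congr rfl fun β _ => ?_
    rw [hT]
    ring
  rw [hform]
  exact hquad
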